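/- A variable-regular Tanner graph with column weight 3, girth 8, in which all cycles of length up to 12 are chordless, has minimum distance at least 10. -/

import Mathlib

open SimpleGraph Finset

/-- A cycle (given as a closed walk) in a graph has a chord if either there is an
edge of the graph between two vertices of the cycle that is not an edge of the cycle,
or there is a vertex outside the cycle adjacent to two distinct vertices of the cycle. -/
def HasChord {V : Type*} (G : SimpleGraph V) {v : V} (c : G.Walk v v) : Prop :=
  (∃ x ∈ c.support, ∃ y ∈ c.support, G.Adj x y ∧ s(x, y) ∉ c.edges) ∨
  (∃ w, w ∉ c.support ∧ ∃ x ∈ c.support, ∃ y ∈ c.support, x ≠ y ∧ G.Adj w x ∧ G.Adj w y)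

/-!
If a check node has `k ≥ 4` neighbours in `S`, each of them reaches two further nodes of `S`
through its two other check nodes, and girth 8 makes these `3k` nodes distinct, so `|S| ≥ 12`.

Otherwise every check node sees zero or two nodes of `S`, and joining two nodes of `S` when they
share a check node gives a cubic graph `H` on `S`; if `|S| < 10`, then `|S| ≤ 8` by parity.
Girth 8 makes `H` triangle-free, and since the 12-cycles of the Tanner graph are chordless, no
hexagon of `H` has a long diagonal. Around a 4-cycle of such a graph with at most eight
vertices, the third neighbours of its vertices are then forced to close up into a triangle or to
leave a vertex of degree two. So `H` has girth at least 5, and the Moore bound gives `|S| ≥ 10`.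
-/

theorem List.Nodup.mem_of_card_le {W : Type*} [Fintype W] {l : List W} (hl : l.Nodup)
    (hcard : Fintype.card W ≤ l.length) (x : W) : x ∈ l := by
  classical
  have : l.toFinset = univ :=
    eq_univ_of_card _ (le_antisymm (card_le_univ _) (by rwa [List.toFinset_card_of_nodup hl]))
  rw [← List.mem_toFinset, this]
  exact mem_univ x

namespace SimpleGraph

section Cycles

variable {V : Type*} {G : SimpleGraph V}

theorem exists_isCycle_of_nodup {u : V} {l : List V} (hnd : (u :: l).Nodup) (hl : 2 ≤ l.length)
    (hchain : (u :: l ++ [u]).IsChain G.Adj) :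
    ∃ w : G.Walk u u, w.IsCycle ∧ w.length = l.length + 1 ∧ w.support = u :: l ++ [u] := by
  have hne : u :: l ++ [u] ≠ [] := List.cons_ne_nil _ _
  obtain ⟨w, hw⟩ : ∃ w : G.Walk u u, w.support = u :: l ++ [u] :=
    ⟨(Walk.ofSupport _ hne hchain).copy (List.head_cons ..) (List.getLast_append_singleton _), by
      rw [Walk.support_copy, Walk.support_ofSupport]⟩
  have hlen : w.length = l.length + 1 := by
    simpa [hw] using w.length_support.symm
  refine ⟨w, ?_, hlen, hw⟩
  have hnil : ¬ w.Nil := by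
    rw [Walk.nil_iff_support_eq, hw]
    simp
  rw [Walk.isCycle_iff_isPath_tail_and_le_length, Walk.isPath_def,
    Walk.support_tail_of_not_nil _ hnil, hw, List.cons_append, List.tail_cons,
    List.nodup_append_comm]
  exact ⟨hnd, by omega⟩

theorem egirth_le_of_nodup {u : V} {l : List V} (hnd : (u :: l).Nodup) (hl : 2 ≤ l.length)
    (hchain : (u :: l ++ [u]).IsChain G.Adj) : G.egirth ≤ l.length + 1 := by
  obtain ⟨w, hw, hlen, -⟩ := exists_isCycle_of_nodup hnd hl hchain
  have := egirth_le_length hw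
  rwa [hlen, Nat.cast_add, Nat.cast_one] at this

theorem subsingleton_commonNeighbors (hg : 4 < G.egirth) {x y : V} (hxy : x ≠ y) :
    (G.commonNeighbors x y).Subsingleton := by
  intro c hc d hd
  by_contra hcd
  rw [mem_commonNeighbors] at hc hd
  have := hg.trans_le <| egirth_le_of_nodup (G := G) (u := x) (l := [c, y, d])
    (by grind [List.nodup_cons, Adj.ne]) (by simp)
    (.cons_cons hc.1 <| .cons_cons hc.2.symm <| .cons_cons hd.2 <| .cons_cons hd.1.symm <|
      .singleton _)
  norm_num at this

end Cycles

section Cubic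

variable {W : Type*}

/-- Short chords need not be excluded: in the triangle-free graphs considered below they
would close a triangle. -/
def HexagonChordFree (H : SimpleGraph W) : Prop :=
  ∀ ⦃x₁ x₂ x₃ x₄ x₅ x₆ : W⦄, [x₁, x₂, x₃, x₄, x₅, x₆].Nodup → H.Adj x₁ x₂ → H.Adj x₂ x₃ →
    H.Adj x₃ x₄ → H.Adj x₄ x₅ → H.Adj x₅ x₆ → H.Adj x₆ x₁ → ¬ H.Adj x₁ x₄

variable {H : SimpleGraph W}

theorem CliqueFree.not_adj_of_adj_of_adj (h : H.CliqueFree 3) {a b c : W}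
    (hab : H.Adj a b) (hbc : H.Adj b c) : ¬ H.Adj a c := fun hac =>
  isIndepSet_neighborSet_of_triangleFree _ h b hab.symm hbc hac.ne hac

variable [Fintype W] [DecidableRel H.Adj]

theorem IsRegularOfDegree.even_card {d : ℕ} (hreg : H.IsRegularOfDegree d) (hd : Odd d) :
    Even (Fintype.card W) := by
  classical
  have h := H.sum_degrees_eq_twice_card_edges
  simp only [hreg.degree_eq, sum_const, card_univ, smul_eq_mul] at h
  exact (Nat.even_mul.1 (h ▸ even_two_mul _)).resolve_right (Nat.not_even_iff_odd.2 hd)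

namespace IsRegularOfDegree

variable (hreg : H.IsRegularOfDegree 3)
include hreg

theorem exists_third_adj {x a b : W} (ha : H.Adj x a) (hb : H.Adj x b) (hab : a ≠ b) :
    ∃ c, H.Adj x c ∧ c ≠ a ∧ c ≠ b ∧ ∀ t, H.Adj x t → t = a ∨ t = b ∨ t = c := by
  classical
  have hcard : #(((H.neighborFinset x).erase a).erase b) = 1 := by
    rw [card_erase_of_mem (by simpa using ⟨hab.symm, hb⟩), card_erase_of_mem (by simpa using ha),
      card_neighborFinset_eq_degree, hreg x]
  obtain ⟨c, hc⟩ := card_eq_one.1 hcard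
  have hcmem : c ∈ ((H.neighborFinset x).erase a).erase b := by simp [hc]
  simp only [mem_erase, mem_neighborFinset] at hcmem
  refine ⟨c, hcmem.2.2, hcmem.2.1, hcmem.1, fun t ht => ?_⟩
  by_contra! hne
  have : t ∈ ((H.neighborFinset x).erase a).erase b := by simp [ht, hne.1, hne.2.1]
  simp [hc, hne.2.2] at this

theorem forall_adj_of_adj {x a b c : W} (ha : H.Adj x a) (hb : H.Adj x b) (hc : H.Adj x c)
    (hab : a ≠ b) (hac : a ≠ c) (hbc : b ≠ c) : ∀ t, H.Adj x t → t = a ∨ t = b ∨ t = c := by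
  obtain ⟨d, -, -, -, hN⟩ := hreg.exists_third_adj ha hb hab
  rcases hN c hc with rfl | rfl | rfl
  exacts [absurd rfl hac, absurd rfl hbc, hN]

theorem exists_adj_ne_ne (x a b : W) : ∃ t, H.Adj x t ∧ t ≠ a ∧ t ≠ b := by
  classical
  by_contra! h
  have hsub : H.neighborFinset x ⊆ {a, b} := fun t ht => by
    rw [mem_neighborFinset] at ht
    by_cases hta : t = a
    · simp [hta]
    · simp [h t ht hta]
  have := card_le_card hsub
  rw [card_neighborFinset_eq_degree, hreg x] at this
  exact absurd (this.trans card_le_two) (by norm_num)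

/-- The Moore bound for cubic graphs of girth at least five. -/
theorem ten_le_card [Nonempty W] (htri : H.CliqueFree 3)
    (hC4 : ∀ ⦃x y⦄, x ≠ y → (H.commonNeighbors x y).Subsingleton) :
    10 ≤ Fintype.card W := by
  classical
  obtain ⟨v⟩ := ‹Nonempty W›
  obtain ⟨p, q, r, hpq, hpr, hqr, hN⟩ :=
    card_eq_three.1 ((card_neighborFinset_eq_degree H v).trans (hreg v))
  have hadj : ∀ x, x ∈ ({p, q, r} : Finset W) → H.Adj v x := fun x hx => by
    rwa [← hN, mem_neighborFinset] at hx
  let out x := (H.neighborFinset x).erase v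
  have hout : ∀ x, H.Adj v x → #(out x) = 2 := fun x hx => by
    rw [card_erase_of_mem (by simpa using hx.symm), card_neighborFinset_eq_degree, hreg x]
  have hdisj : ∀ x y, H.Adj v x → H.Adj v y → x ≠ y → Disjoint (out x) (out y) := by
    refine fun x y hx hy hxy => Finset.disjoint_left.2 fun w hwx hwy => ?_
    simp only [out, mem_erase, mem_neighborFinset] at hwx hwy
    exact hwx.1 (hC4 hxy ⟨hwx.2, hwy.2⟩ ⟨hx.symm, hy.symm⟩)
  have hball : ∀ x, H.Adj v x → Disjoint (insert v (H.neighborFinset v)) (out x) := by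
    refine fun x hx => Finset.disjoint_left.2 fun w hw hwx => ?_
    simp only [out, mem_erase, mem_neighborFinset, mem_insert] at hw hwx
    rcases hw with rfl | hw
    · exact hwx.1 rfl
    · exact htri.not_adj_of_adj_of_adj hw hwx.2.symm hx
  have hp := hadj p (by simp)
  have hq := hadj q (by simp)
  have hr := hadj r (by simp)
  calc 10 = #(insert v (H.neighborFinset v)) + #(out p) + #(out q) + #(out r) := by
        rw [card_insert_of_notMem (by simp), card_neighborFinset_eq_degree, hreg v, hout p hp,
          hout q hq, hout r hr]
    _ = #(insert v (H.neighborFinset v) ∪ out p ∪ out q ∪ out r) := by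
        rw [card_union_of_disjoint, card_union_of_disjoint, card_union_of_disjoint]
        · exact hball p hp
        · exact disjoint_union_left.2 ⟨hball q hq, hdisj p q hp hq hpq⟩
        · exact disjoint_union_left.2
            ⟨disjoint_union_left.2 ⟨hball r hr, hdisj p r hp hr hpr⟩, hdisj q r hq hr hqr⟩
    _ ≤ Fintype.card W := card_le_univ _

end IsRegularOfDegree

namespace HexagonChordFree

variable (hhex : H.HexagonChordFree) (hreg : H.IsRegularOfDegree 3) (htri : H.CliqueFree 3)
include hhex hreg htri

theorem false_of_completeBipartite_two_three (hcard : Fintype.card W ≤ 8) {a c b d z : W}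
    (hac : a ≠ c) (hbd : b ≠ d) (hbz : b ≠ z) (hdz : d ≠ z) (hab : H.Adj a b) (had : H.Adj a d)
    (haz : H.Adj a z) (hcb : H.Adj c b) (hcd : H.Adj c d) (hcz : H.Adj c z) : False := by
  classical
  have tri := fun {x y w : W} (h₁ : H.Adj x y) (h₂ : H.Adj y w) (h₃ : H.Adj x w) =>
    htri.not_adj_of_adj_of_adj h₁ h₂ h₃
  obtain ⟨b', hbb', hb'a, hb'c, hNb⟩ := hreg.exists_third_adj hab.symm hcb.symm hac
  obtain ⟨d', hdd', hd'a, hd'c, hNd⟩ := hreg.exists_third_adj had.symm hcd.symm hac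
  obtain ⟨z', hzz', hz'a, hz'c, hNz⟩ := hreg.exists_third_adj haz.symm hcz.symm hac
  have hNa := hreg.forall_adj_of_adj hab had haz hbd hbz hdz
  have hNc := hreg.forall_adj_of_adj hcb hcd hcz hbd hbz hdz
  have hb'd' : b' ≠ d' := by
    rintro rfl
    exact hhex (x₁ := b) (x₂ := a) (x₃ := z) (x₄ := c) (x₅ := d) (x₆ := b')
      (by grind [List.nodup_cons, Adj.ne]) hab.symm haz hcz.symm hcd hdd' hbb'.symm hcb.symm
  have hb'z' : b' ≠ z' := by
    rintro rfl
    exact hhex (x₁ := a) (x₂ := b) (x₃ := b') (x₄ := z) (x₅ := c) (x₆ := d)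
      (by grind [List.nodup_cons, Adj.ne]) hab hbb' hzz'.symm hcz.symm hcd had.symm haz
  have hd'z' : d' ≠ z' := by
    rintro rfl
    exact hhex (x₁ := a) (x₂ := d) (x₃ := d') (x₄ := z) (x₅ := c) (x₆ := b)
      (by grind [List.nodup_cons, Adj.ne]) had hdd' hzz'.symm hcz.symm hcb hab.symm haz
  have hall : ∀ t, t = a ∨ t = c ∨ t = b ∨ t = d ∨ t = z ∨ t = b' ∨ t = d' ∨ t = z' := by
    simpa using List.Nodup.mem_of_card_le (l := [a, c, b, d, z, b', d', z'])
      (by grind [List.nodup_cons, Adj.ne]) (by simpa using hcard)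
  -- All vertices are known now: `b'` and `d'` have no neighbours left but each other and `z'`.
  have h₁ : H.Adj b' d' := by
    obtain ⟨t, ht, htb, htz'⟩ := hreg.exists_adj_ne_ne b' b z'
    have := hall t
    grind [Adj.symm]
  have h₂ : H.Adj b' z' := by
    obtain ⟨t, ht, htb, htd'⟩ := hreg.exists_adj_ne_ne b' b d'
    have := hall t
    grind [Adj.symm]
  have h₃ : H.Adj d' z' := by
    obtain ⟨t, ht, htd, htb'⟩ := hreg.exists_adj_ne_ne d' d b'
    have := hall t
    grind [Adj.symm]
  exact tri h₁ h₃ h₂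

theorem subsingleton_commonNeighbors (hcard : Fintype.card W ≤ 8) {b d : W} (hbd : b ≠ d) :
    (H.commonNeighbors b d).Subsingleton := by
  intro a ha c hc
  by_contra hac
  rw [mem_commonNeighbors] at ha hc
  obtain ⟨hba, hda⟩ := ha
  obtain ⟨hbc, hdc⟩ := hc
  have tri := fun {x y w : W} (h₁ : H.Adj x y) (h₂ : H.Adj y w) (h₃ : H.Adj x w) =>
    htri.not_adj_of_adj_of_adj h₁ h₂ h₃
  obtain ⟨a', haa', ha'b, ha'd, hNa⟩ := hreg.exists_third_adj hba.symm hda.symm hbd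
  obtain ⟨c', hcc', hc'b, hc'd, hNc⟩ := hreg.exists_third_adj hbc.symm hdc.symm hbd
  obtain ⟨b', hbb', hb'a, hb'c, hNb⟩ := hreg.exists_third_adj hba hbc hac
  obtain ⟨d', hdd', hd'a, hd'c, hNd⟩ := hreg.exists_third_adj hda hdc hac
  by_cases ha'c' : a' = c'
  · subst ha'c'
    exact hhex.false_of_completeBipartite_two_three hreg htri hcard hac hbd ha'b.symm ha'd.symm
      hba.symm hda.symm haa' hbc.symm hdc.symm hcc'
  by_cases hb'd' : b' = d'
  · subst hb'd'
    exact hhex.false_of_completeBipartite_two_three hreg htri hcard hbd hac hb'a.symm hb'c.symm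
      hba hbc hbb' hda hdc hdd'
  have ha'b' : ¬ H.Adj a' b' := fun h => hhex (x₁ := b) (x₂ := b') (x₃ := a') (x₄ := a)
    (x₅ := d) (x₆ := c) (by grind [List.nodup_cons, Adj.ne]) hbb' h.symm haa'.symm hda.symm hdc
    hbc.symm hba
  have ha'd' : ¬ H.Adj a' d' := fun h => hhex (x₁ := d) (x₂ := d') (x₃ := a') (x₄ := a)
    (x₅ := b) (x₆ := c) (by grind [List.nodup_cons, Adj.ne]) hdd' h.symm haa'.symm hba.symm hbc
    hdc.symm hda
  have hall : ∀ t, t = a ∨ t = b ∨ t = c ∨ t = d ∨ t = a' ∨ t = b' ∨ t = c' ∨ t = d' := by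
    simpa using List.Nodup.mem_of_card_le (l := [a, b, c, d, a', b', c', d'])
      (by grind [List.nodup_cons, Adj.ne]) (by simpa using hcard)
  -- All vertices are known now, and none of them can be the third neighbour of `a'`.
  obtain ⟨t, ht, hta, htc'⟩ := hreg.exists_adj_ne_ne a' a c'
  have := hall t
  grind [Adj.symm]

theorem ten_le_card [Nonempty W] : 10 ≤ Fintype.card W := by
  by_contra! h
  have h8 : Fintype.card W ≤ 8 := by
    obtain ⟨k, hk⟩ := hreg.even_card (by decide)
    omega
  exact h.not_ge <| hreg.ten_le_card htri fun _ _ hxy =>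
    hhex.subsingleton_commonNeighbors hreg htri h8 hxy

end HexagonChordFree

end Cubic

end SimpleGraph

section TannerGraph

variable {V : Type*}

/-- For an elementary trapping set `S` (every check node has degree `0` or `2` into `S`) the
edges of this graph are the check nodes of degree `2`. -/
def commonNeighborGraph (G : SimpleGraph V) (S : Finset V) : SimpleGraph S where
  Adj x y := (x : V) ≠ y ∧ ∃ c, G.Adj c x ∧ G.Adj c y
  symm := ⟨fun _ _ h => ⟨h.1.symm, h.2.imp fun _ hc => hc.symm⟩⟩
  loopless := ⟨fun _ h => h.1 rfl⟩

def farNeighbors [Fintype V] [DecidableEq V] (G : SimpleGraph V) [DecidableRel G.Adj]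
    (S : Finset V) (c₀ v : V) : Finset V :=
  {y ∈ S.erase v | ∃ c ∈ (G.neighborFinset v).erase c₀, G.Adj c y}

variable {G : SimpleGraph V} [DecidableRel G.Adj] {S : Finset V}

instance [Fintype V] [DecidableEq V] : DecidableRel (commonNeighborGraph G S).Adj :=
  fun x y => inferInstanceAs (Decidable ((x : V) ≠ y ∧ ∃ c, G.Adj c x ∧ G.Adj c y))

theorem exists_adj_ne_of_even {c a : V} (heven : Even #{v ∈ S | G.Adj c v}) (ha : a ∈ S)
    (hca : G.Adj c a) : ∃ b ∈ S, b ≠ a ∧ G.Adj c b := by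
  have hpos : 0 < #{v ∈ S | G.Adj c v} := card_pos.2 ⟨a, mem_filter.2 ⟨ha, hca⟩⟩
  obtain ⟨b, hb, hba⟩ := exists_mem_ne (s := {v ∈ S | G.Adj c v})
    (by obtain ⟨k, hk⟩ := heven; omega) a
  exact ⟨b, (mem_filter.1 hb).1, hba, (mem_filter.1 hb).2⟩

variable [Fintype V] [DecidableEq V]

theorem mem_farNeighbors {c₀ v y : V} :
    y ∈ farNeighbors G S c₀ v ↔ y ∈ S ∧ y ≠ v ∧ ∃ c, c ≠ c₀ ∧ G.Adj c v ∧ G.Adj c y := by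
  simp only [farNeighbors, mem_filter, mem_erase, mem_neighborFinset, adj_comm]
  tauto

theorem disjoint_filter_farNeighbors (hg : 4 < G.egirth) {c₀ v : V} (hc₀ : G.Adj c₀ v) :
    Disjoint {y ∈ S | G.Adj c₀ y} (farNeighbors G S c₀ v) := by
  refine Finset.disjoint_left.2 fun y hy hy' => ?_
  obtain ⟨-, hyv, c, hc, hcv, hcy⟩ := mem_farNeighbors.1 hy'
  exact hc (subsingleton_commonNeighbors hg hyv ⟨hcy.symm, hcv.symm⟩
    ⟨(mem_filter.1 hy).2.symm, hc₀.symm⟩)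

end TannerGraph

section Bipartite

variable {V : Type*} {G : SimpleGraph V} {isVar : V → Prop}
  (hbip : ∀ x y, G.Adj x y → (isVar x ↔ ¬ isVar y))
include hbip

theorem not_isVar_of_adj {c x : V} (hcx : G.Adj c x) (hx : isVar x) : ¬ isVar c :=
  fun hc => (hbip c x hcx).1 hc hx

theorem false_of_six_cycle (hg : 6 < G.egirth) {x₁ x₂ x₃ c₁ c₂ c₃ : V} (hx₁ : isVar x₁)
    (hx₂ : isVar x₂) (hx₃ : isVar x₃) (hx : [x₁, x₂, x₃].Nodup) (hc : [c₁, c₂, c₃].Nodup)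
    (h₁ : G.Adj c₁ x₁) (h₂ : G.Adj c₁ x₂) (h₃ : G.Adj c₂ x₂) (h₄ : G.Adj c₂ x₃)
    (h₅ : G.Adj c₃ x₃) (h₆ : G.Adj c₃ x₁) : False := by
  have := not_isVar_of_adj hbip h₁ hx₁
  have := not_isVar_of_adj hbip h₃ hx₂
  have := not_isVar_of_adj hbip h₅ hx₃
  have := hg.trans_le <| egirth_le_of_nodup (G := G) (u := x₁) (l := [c₁, x₂, c₂, x₃, c₃])
    (by grind [List.nodup_cons]) (by simp)
    (.cons_cons h₁.symm <| .cons_cons h₂ <| .cons_cons h₃.symm <| .cons_cons h₄ <|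
      .cons_cons h₅.symm <| .cons_cons h₆ <| .singleton _)
  norm_num at this

variable [DecidableRel G.Adj] {S : Finset V} (hSvar : ∀ v ∈ S, isVar v)
include hSvar

section NonElementary

variable [Fintype V]

theorem two_le_card_farNeighbors [DecidableEq V] (hdegV : ∀ v, isVar v → G.degree v = 3)
    (hg : 4 < G.egirth) (heven : ∀ w, ¬ isVar w → Even #{v ∈ S | G.Adj w v}) {c₀ v : V}
    (hv : v ∈ S) (hc₀ : G.Adj c₀ v) : 2 ≤ #(farNeighbors G S c₀ v) := by
  have hcard : #((G.neighborFinset v).erase c₀) = 2 := by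
    rw [card_erase_of_mem (by simpa using hc₀.symm), card_neighborFinset_eq_degree,
      hdegV v (hSvar v hv)]
  obtain ⟨f, g, hfg, hfg'⟩ := card_eq_two.1 hcard
  have hf : f ∈ (G.neighborFinset v).erase c₀ := by simp [hfg']
  have hg' : g ∈ (G.neighborFinset v).erase c₀ := by simp [hfg']
  simp only [mem_erase, mem_neighborFinset] at hf hg'
  obtain ⟨a, ha, hav, hfa⟩ := exists_adj_ne_of_even
    (heven f (not_isVar_of_adj hbip hf.2.symm (hSvar v hv))) hv hf.2.symm
  obtain ⟨b, hb, hbv, hgb⟩ := exists_adj_ne_of_even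
    (heven g (not_isVar_of_adj hbip hg'.2.symm (hSvar v hv))) hv hg'.2.symm
  have hab : a ≠ b := by
    rintro rfl
    exact hfg (subsingleton_commonNeighbors hg hav.symm ⟨hf.2, hfa.symm⟩ ⟨hg'.2, hgb.symm⟩)
  refine one_lt_card.2 ⟨a, ?_, b, ?_, hab⟩ <;> rw [mem_farNeighbors]
  exacts [⟨ha, hav, f, hf.1, hf.2.symm, hfa⟩, ⟨hb, hbv, g, hg'.1, hg'.2.symm, hgb⟩]

theorem disjoint_farNeighbors [DecidableEq V] (hg : 6 < G.egirth) {c₀ v w : V} (hv : v ∈ S)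
    (hw : w ∈ S) (hvw : v ≠ w) (hc₀v : G.Adj c₀ v) (hc₀w : G.Adj c₀ w) :
    Disjoint (farNeighbors G S c₀ v) (farNeighbors G S c₀ w) := by
  refine Finset.disjoint_left.2 fun y hy hy' => ?_
  obtain ⟨hyS, hyv, c, hc, hcv, hcy⟩ := mem_farNeighbors.1 hy
  obtain ⟨-, hyw, c', hc', hc'w, hc'y⟩ := mem_farNeighbors.1 hy'
  have hcc' : c ≠ c' := by
    rintro rfl
    exact hc (subsingleton_commonNeighbors (lt_trans (by norm_num) hg) hvw
      ⟨hcv.symm, hc'w.symm⟩ ⟨hc₀v.symm, hc₀w.symm⟩)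
  exact false_of_six_cycle hbip hg (hSvar v hv) (hSvar y hyS) (hSvar w hw)
    (by grind [List.nodup_cons]) (by grind [List.nodup_cons]) hcv hcy hc'y hc'w hc₀w hc₀v

theorem three_mul_card_filter_le_card (hdegV : ∀ v, isVar v → G.degree v = 3)
    (hg : 6 < G.egirth) (heven : ∀ w, ¬ isVar w → Even #{v ∈ S | G.Adj w v}) (c₀ : V) :
    3 * #{v ∈ S | G.Adj c₀ v} ≤ #S := by
  classical
  set N := {v ∈ S | G.Adj c₀ v}
  have hmem : ∀ v ∈ N, v ∈ S ∧ G.Adj c₀ v := fun v hv => mem_filter.1 hv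
  have hfar : 2 * #N ≤ #(N.biUnion (farNeighbors G S c₀)) := by
    rw [card_biUnion fun v hv w hw hvw => disjoint_farNeighbors hbip hSvar hg (hmem v hv).1
      (hmem w hw).1 hvw (hmem v hv).2 (hmem w hw).2]
    calc 2 * #N = ∑ _ ∈ N, 2 := by rw [sum_const, smul_eq_mul, mul_comm]
      _ ≤ _ := sum_le_sum fun v hv => two_le_card_farNeighbors hbip hSvar hdegV
        (lt_trans (by norm_num) hg) heven (hmem v hv).1 (hmem v hv).2
  have hdisj : Disjoint N (N.biUnion (farNeighbors G S c₀)) :=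
    (disjoint_biUnion_right _ _ _).2 fun v hv =>
      disjoint_filter_farNeighbors (lt_trans (by norm_num) hg) (hmem v hv).2
  have hsub : N ∪ N.biUnion (farNeighbors G S c₀) ⊆ S :=
    union_subset (filter_subset _ _) fun y hy => by
      obtain ⟨v, -, hy⟩ := mem_biUnion.1 hy
      exact (mem_farNeighbors.1 hy).1
  have := card_le_card hsub
  rw [card_union_of_disjoint hdisj] at this
  omega

end NonElementary

section Elementary

variable (hS2 : ∀ c, ¬ isVar c → #{v ∈ S | G.Adj c v} ≤ 2)
include hS2

theorem eq_or_eq_of_adj {c a b : V} (ha : a ∈ S) (hb : b ∈ S) (hab : a ≠ b) (hca : G.Adj c a)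
    (hcb : G.Adj c b) : ∀ y ∈ S, G.Adj c y → y = a ∨ y = b := by
  intro y hy hcy
  by_contra! h
  refine (hS2 c (not_isVar_of_adj hbip hca (hSvar a ha))).not_gt (two_lt_card.2 ?_)
  exact ⟨a, mem_filter.2 ⟨ha, hca⟩, b, mem_filter.2 ⟨hb, hcb⟩, y, mem_filter.2 ⟨hy, hcy⟩,
    hab, h.1.symm, h.2.symm⟩

theorem commonNeighborGraph_cliqueFree (hg : 6 < G.egirth) :
    (commonNeighborGraph G S).CliqueFree 3 := by
  classical
  intro t ht
  obtain ⟨x, y, z, hxy, hxz, hyz, rfl⟩ := card_eq_three.1 ht.card_eq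
  obtain ⟨⟨-, c₁, hc₁x, hc₁y⟩, ⟨-, c₃, hc₃x, hc₃z⟩, ⟨-, c₂, hc₂y, hc₂z⟩⟩ :=
    is3Clique_triple_iff.1 ht
  replace hxy : (x : V) ≠ y := Subtype.coe_ne_coe.2 hxy
  replace hxz : (x : V) ≠ z := Subtype.coe_ne_coe.2 hxz
  replace hyz : (y : V) ≠ z := Subtype.coe_ne_coe.2 hyz
  have o₁ := eq_or_eq_of_adj hbip hSvar hS2 x.2 y.2 hxy hc₁x hc₁y
  have o₂ := eq_or_eq_of_adj hbip hSvar hS2 y.2 z.2 hyz hc₂y hc₂z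
  have o₃ := eq_or_eq_of_adj hbip hSvar hS2 x.2 z.2 hxz hc₃x hc₃z
  exact false_of_six_cycle hbip hg (hSvar x x.2) (hSvar y y.2) (hSvar z z.2)
    (by grind [List.nodup_cons]) (by grind [List.nodup_cons]) hc₁x hc₁y hc₂y hc₂z hc₃z hc₃x

theorem commonNeighborGraph_isRegularOfDegree [Fintype V] [DecidableEq V]
    (hdegV : ∀ v, isVar v → G.degree v = 3) (hg : 4 < G.egirth)
    (heven : ∀ w, ¬ isVar w → Even #{v ∈ S | G.Adj w v}) :
    (commonNeighborGraph G S).IsRegularOfDegree 3 := by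
  intro x
  rw [← card_neighborFinset_eq_degree, ← hdegV x (hSvar x x.2), ← card_neighborFinset_eq_degree]
  refine card_bij (fun y hy => ((mem_neighborFinset _ _ _).1 hy).2.choose) ?_ ?_ ?_
  · intro y hy
    exact (mem_neighborFinset _ _ _).2 ((mem_neighborFinset _ _ _).1 hy).2.choose_spec.1.symm
  · intro y₁ hy₁ y₂ hy₂ h
    obtain ⟨hxy₁, h₁⟩ := (mem_neighborFinset _ _ _).1 hy₁
    obtain ⟨hxy₂, h₂⟩ := (mem_neighborFinset _ _ _).1 hy₂
    have h₁ := h₁.choose_spec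
    have h₂ := h₂.choose_spec
    rw [h] at h₁
    rcases eq_or_eq_of_adj hbip hSvar hS2 x.2 y₂.2 hxy₂ h₂.1 h₂.2 _ y₁.2 h₁.2 with h | h
    · exact absurd h.symm hxy₁
    · exact Subtype.ext h
  · intro c hc
    have hxc := (mem_neighborFinset _ _ _).1 hc
    obtain ⟨y, hyS, hyx, hcy⟩ := exists_adj_ne_of_even
      (heven c (not_isVar_of_adj hbip hxc.symm (hSvar x x.2))) x.2 hxc.symm
    have hadj : (commonNeighborGraph G S).Adj x ⟨y, hyS⟩ := ⟨hyx.symm, c, hxc.symm, hcy⟩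
    refine ⟨⟨y, hyS⟩, (mem_neighborFinset _ _ _).2 hadj, ?_⟩
    have h := hadj.2.choose_spec
    exact subsingleton_commonNeighbors hg hyx.symm ⟨h.1.symm, h.2.symm⟩ ⟨hxc, hcy.symm⟩

/-- A hexagon of `commonNeighborGraph G S` with the diagonal `x₁x₄` lifts to a 12-cycle of `G`
through the checks of its edges, and the check shared by `x₁` and `x₄` is a chord of it. -/
theorem commonNeighborGraph_hexagonChordFree
    (hchord : ∀ (v : V) (c : G.Walk v v), c.IsCycle → c.length ≤ 12 → ¬ HasChord G c) :
    (commonNeighborGraph G S).HexagonChordFree := by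
  rintro ⟨x₁, m₁⟩ ⟨x₂, m₂⟩ ⟨x₃, m₃⟩ ⟨x₄, m₄⟩ ⟨x₅, m₅⟩ ⟨x₆, m₆⟩ hx ⟨n₁, d₁, h₁, h₁'⟩
    ⟨n₂, d₂, h₂, h₂'⟩ ⟨n₃, d₃, h₃, h₃'⟩ ⟨n₄, d₄, h₄, h₄'⟩ ⟨n₅, d₅, h₅, h₅'⟩ ⟨n₆, d₆, h₆, h₆'⟩
    ⟨n, e, he, he'⟩
  dsimp only at *
  replace hx := hx.map Subtype.val_injective
  simp only [List.map_cons, List.map_nil, List.nodup_cons, List.mem_cons, List.not_mem_nil,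
    List.nodup_nil] at hx
  have o₁ := eq_or_eq_of_adj hbip hSvar hS2 m₁ m₂ n₁ h₁ h₁'
  have o₂ := eq_or_eq_of_adj hbip hSvar hS2 m₂ m₃ n₂ h₂ h₂'
  have o₃ := eq_or_eq_of_adj hbip hSvar hS2 m₃ m₄ n₃ h₃ h₃'
  have o₄ := eq_or_eq_of_adj hbip hSvar hS2 m₄ m₅ n₄ h₄ h₄'
  have o₅ := eq_or_eq_of_adj hbip hSvar hS2 m₅ m₆ n₅ h₅ h₅'
  have o₆ := eq_or_eq_of_adj hbip hSvar hS2 m₆ m₁ n₆ h₆ h₆'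
  have o := eq_or_eq_of_adj hbip hSvar hS2 m₁ m₄ n he he'
  have check : ∀ ⦃c x⦄, G.Adj c x → x ∈ S → ¬ isVar c := fun _ x h hx =>
    not_isVar_of_adj hbip h (hSvar x hx)
  clear hbip hS2
  have hnd : [x₁, d₁, x₂, d₂, x₃, d₃, x₄, d₄, x₅, d₅, x₆, d₆].Nodup := by
    simp only [List.nodup_cons, List.mem_cons, List.not_mem_nil, List.nodup_nil, not_or,
      or_false, and_true]
    repeat' apply And.intro
    all_goals intro h; grind
  obtain ⟨w, hw, hlen, hsupp⟩ := exists_isCycle_of_nodup (G := G) hnd (by simp)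
    (.cons_cons h₁.symm <| .cons_cons h₁' <| .cons_cons h₂.symm <| .cons_cons h₂' <|
      .cons_cons h₃.symm <| .cons_cons h₃' <| .cons_cons h₄.symm <| .cons_cons h₄' <|
      .cons_cons h₅.symm <| .cons_cons h₅' <| .cons_cons h₆.symm <| .cons_cons h₆' <| .singleton _)
  refine hchord x₁ w hw (by simp [hlen])
    (Or.inr ⟨e, ?_, x₁, by simp [hsupp], x₄, by simp [hsupp], n, he, he'⟩)
  rw [hsupp]
  simp only [List.cons_append, List.nil_append, List.mem_cons, List.not_mem_nil, or_false, not_or]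
  repeat' apply And.intro
  all_goals intro h; grind

end Elementary

end Bipartite

theorem stmt_15_general {V : Type*} [Fintype V]
    (G : SimpleGraph V) [DecidableRel G.Adj]
    (isVar : V → Prop)
    (hbip : ∀ x y, G.Adj x y → (isVar x ↔ ¬ isVar y))
    (hdegV : ∀ v, isVar v → G.degree v = 3)
    (hg : (8 : ℕ∞) ≤ G.girth)
    (hchord : ∀ (v : V) (c : G.Walk v v), c.IsCycle → c.length ≤ 12 → ¬ HasChord G c)
    (S : Finset V) (hSvar : ∀ v ∈ S, isVar v) (hSne : S.Nonempty)
    (heven : ∀ w, ¬ isVar w → Even ((S.filter (fun v => G.Adj w v)).card)) :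
    10 ≤ S.card := by
  classical
  have hg8 : 8 ≤ G.egirth := hg.trans (ENat.natCast_toNat_le_self _)
  have hg6 : 6 < G.egirth := lt_of_lt_of_le (by norm_num) hg8
  have hg4 : 4 < G.egirth := lt_of_lt_of_le (by norm_num) hg8
  by_cases hA : ∃ c, 4 ≤ #{v ∈ S | G.Adj c v}
  · obtain ⟨c, hc⟩ := hA
    have := three_mul_card_filter_le_card hbip hSvar hdegV hg6 heven c
    omega
  push Not at hA
  have hS2 : ∀ c, ¬ isVar c → #{v ∈ S | G.Adj c v} ≤ 2 := fun c hc => by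
    obtain ⟨k, hk⟩ := heven c hc
    have := hA c
    omega
  have : Nonempty S := hSne.to_subtype
  have := (commonNeighborGraph_hexagonChordFree hbip hSvar hS2 hchord).ten_le_card
    (commonNeighborGraph_isRegularOfDegree hbip hSvar hS2 hdegV hg4 heven)
    (commonNeighborGraph_cliqueFree hbip hSvar hS2 hg6)
  simpa using this

/-- A variable-regular Tanner graph with column weight 3, girth (at least) 8, in
which all cycles of length up to 12 are chordless, has minimum distance at least 10:
every nonempty `(a,0)` trapping set (set of variable nodes all of whose adjacent
check nodes have even degree into it, i.e. the support of a codeword) has `a ≥ 10`. -/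
theorem stmt_15 {V : Type*} [Fintype V] [DecidableEq V]
    (G : SimpleGraph V) [DecidableRel G.Adj]
    (isVar : V → Prop) [DecidablePred isVar]
    (hbip : ∀ x y, G.Adj x y → (isVar x ↔ ¬ isVar y))
    (hdegV : ∀ v, isVar v → G.degree v = 3)
    (hg : (8 : ℕ∞) ≤ G.girth)
    (hchord : ∀ (v : V) (c : G.Walk v v), c.IsCycle → c.length ≤ 12 → ¬ HasChord G c)
    (S : Finset V) (hSvar : ∀ v ∈ S, isVar v) (hSne : S.Nonempty)
    (heven : ∀ w, ¬ isVar w → Even ((S.filter (fun v => G.Adj w v)).card)) :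
    10 ≤ S.card :=
  stmt_15_general G isVar hbip hdegV hg hchord S hSvar hSne heven
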